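/- Let A be a commutative unital ring and B a unital commutative ring which is a proper ideal of A with identity 1_B ∈ A. Let S be the ring of 3×3 matrices with entries a_{ij} where a_{13}, a_{23}, a_{31}, a_{32} ∈ B and all other entries in A, graded by Z_2 with S_0 the subring of matrices supported on positions {(1,1),(1,2),(2,1),(2,2),(3,3)} and S_1 the set of matrices supported on positions {(1,3),(2,3),(3,1),(3,2)} with entries in B. Then S is epsilon-strongly Z_2-graded with ε_0 = 1_A·I and ε_1 = 1_B·I, S is not strongly graded (since 1_A ∉ B), and the extension S/S_0 is separable. -/

import Mathlib

/-!
Give the index `i` of `M₃(A)` the degree `d i ∈ ℤ₂`, with `d = (0, 0, 1)`, and the position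
`(i, j)` the degree `d i - d j`. Then `S0`, `S1` and `Stot` are the matrices with entries of
degree `1` in `B` that are supported in degree `0`, supported in degree `1`, or arbitrary, and the
grading is multiplicative because `(d i - d k) + (d k - d j) = d i - d j`. All entries of a
matrix in `S1` lie in `B`, so `S1 * S1` lies in the proper ideal `M₃(B)` and misses `1`, while
`1_B • 1 = ∑ᵢ E_{ij}(1_B) E_{ji}(1_B)`, with `(i, j)` of degree `1`, lies in `S1 * S1`.
The separability element is `∑ᵢ E_{i0}(1_B) ⊗ E_{0i}(1_B) + (1 - 1_B) • 1 ⊗ 1`: moving the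
matrices `E_{00}(a) ∈ S0` across the tensor sign turns the first sum into its mirror image, and
the central second summand can be moved across because `1 - 1_B` kills every entry of degree `1`,
so that `(1 - 1_B) • s ∈ S0`.
-/

open Pointwise

universe u

namespace AddSubgroup

variable {R : Type*} [NonUnitalNonAssocRing R] {M N P : AddSubgroup R}

theorem mul_le : M * N ≤ P ↔ ∀ m ∈ M, ∀ n ∈ N, m * n ∈ P :=
  AddSubmonoid.mul_le

theorem mul_mem_mul {m n : R} (hm : m ∈ M) (hn : n ∈ N) : m * n ∈ M * N :=
  AddSubmonoid.mul_mem_mul hm hn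

end AddSubgroup

/-- Maps out of `S × S` with these properties are exactly those factoring through `S ⊗_R S`. -/
structure IsBalancedOn {X M : Type*} [Ring X] [AddCommGroup M] (R S : AddSubgroup X)
    (φ : X → X → M) : Prop where
  add_left : ∀ x ∈ S, ∀ x' ∈ S, ∀ y ∈ S, φ (x + x') y = φ x y + φ x' y
  add_right : ∀ x ∈ S, ∀ y ∈ S, ∀ y' ∈ S, φ x (y + y') = φ x y + φ x y'
  mul_left_eq_mul_right : ∀ r ∈ R, ∀ x ∈ S, ∀ y ∈ S, φ (x * r) y = φ x (r * y)

namespace IsBalancedOn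

variable {X M : Type*} [Ring X] [AddCommGroup M] {R S : AddSubgroup X} {φ : X → X → M}

theorem map_sum_left (hφ : IsBalancedOn R S φ) {ι : Type*} (s : Finset ι) {x : ι → X}
    (hx : ∀ i, x i ∈ S) {y : X} (hy : y ∈ S) : φ (∑ i ∈ s, x i) y = ∑ i ∈ s, φ (x i) y := by
  let f : S →+ M := AddMonoidHom.mk' (fun x => φ x y) fun a b => hφ.add_left a a.2 b b.2 y hy
  simpa only [f, AddMonoidHom.mk'_apply, AddSubmonoidClass.coe_finsetSum] using
    map_sum f (fun i => ⟨x i, hx i⟩) s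

theorem map_sum_right (hφ : IsBalancedOn R S φ) {ι : Type*} (s : Finset ι) {x : X} (hx : x ∈ S)
    {y : ι → X} (hy : ∀ i, y i ∈ S) : φ x (∑ i ∈ s, y i) = ∑ i ∈ s, φ x (y i) := by
  let f : S →+ M := AddMonoidHom.mk' (fun y => φ x y) fun a b => hφ.add_right x hx a a.2 b b.2
  simpa only [f, AddMonoidHom.mk'_apply, AddSubmonoidClass.coe_finsetSum] using
    map_sum f (fun i => ⟨y i, hy i⟩) s

theorem map_mul_one_of_commute (hφ : IsBalancedOn R S φ) (h1 : (1 : X) ∈ S) {c s : X}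
    (hc : c ∈ R) (hs : s ∈ S) (hcs : c * s ∈ R) (hcomm : Commute s c) : φ (s * c) 1 = φ c s :=
  calc φ (s * c) 1 = φ (1 * (c * s)) 1 := by rw [one_mul, hcomm.eq]
    _ = φ 1 (c * s) := by simpa using hφ.mul_left_eq_mul_right _ hcs 1 h1 1 h1
    _ = φ c s := by simpa using (hφ.mul_left_eq_mul_right c hc 1 h1 s hs).symm

end IsBalancedOn

namespace Matrix

section Single

variable {ι A : Type*} [Fintype ι] [DecidableEq ι] [Semiring A]

theorem mul_single_eq_sum (s : Matrix ι ι A) (i k : ι) (a : A) :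
    s * single i k a = ∑ j, single j k (s j i * a) := by
  ext p q
  simp [mul_apply, sum_apply, single_apply, ite_and, Finset.sum_ite_eq, Finset.sum_ite_eq']

theorem single_mul_eq_sum (s : Matrix ι ι A) (k j : ι) (a : A) :
    single k j a * s = ∑ i, single k i (a * s j i) := by
  ext p q
  simp [mul_apply, sum_apply, single_apply, ite_and, Finset.sum_ite_eq, Finset.sum_ite_eq',
    Finset.sum_ite_irrel]

theorem sum_single_mul_single {e : A} (hee : e * e = e) (k : ι) :
    ∑ i, single i k e * single k i e = e • (1 : Matrix ι ι A) := by
  simp only [single_mul_single_same, hee]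
  rw [smul_one_eq_diagonal, ← sum_single_eq_diagonal]

end Single

section Graded

variable {ι G A : Type*} [AddGroup G] [Ring A]

/-- The position `(i, j)` has degree `d i - d j`. -/
def gradedEntries (d : ι → G) (C : G → AddSubgroup A) : AddSubgroup (Matrix ι ι A) where
  carrier := {M | ∀ i j, M i j ∈ C (d i - d j)}
  add_mem' hM hN i j := add_mem (hM i j) (hN i j)
  zero_mem' _ _ := zero_mem _
  neg_mem' hM i j := neg_mem (hM i j)

def gradedPiece (d : ι → G) (C : G → AddSubgroup A) (g : G) : AddSubgroup (Matrix ι ι A) where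
  carrier := {M | M ∈ gradedEntries d C ∧ ∀ i j, d i - d j ≠ g → M i j = 0}
  add_mem' hM hN := ⟨add_mem hM.1 hN.1, fun i j hij => by
    rw [add_apply, hM.2 i j hij, hN.2 i j hij, add_zero]⟩
  zero_mem' := ⟨zero_mem _, fun _ _ _ => rfl⟩
  neg_mem' hM := ⟨neg_mem hM.1, fun i j hij => by rw [neg_apply, hM.2 i j hij, neg_zero]⟩

variable {d : ι → G} {C : G → AddSubgroup A}

@[simp]
theorem mem_gradedEntries {M : Matrix ι ι A} :
    M ∈ gradedEntries d C ↔ ∀ i j, M i j ∈ C (d i - d j) :=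
  Iff.rfl

@[simp]
theorem mem_gradedPiece {M : Matrix ι ι A} {g : G} :
    M ∈ gradedPiece d C g ↔ (∀ i j, M i j ∈ C (d i - d j)) ∧ ∀ i j, d i - d j ≠ g → M i j = 0 :=
  Iff.rfl

theorem gradedPiece_le (g : G) : gradedPiece d C g ≤ gradedEntries d C :=
  fun _ hM => hM.1

theorem gradedPiece_inf_eq_bot {g h : G} (hgh : g ≠ h) :
    gradedPiece d C g ⊓ gradedPiece d C h = ⊥ := by
  refine eq_bot_iff.2 fun M hM => (AddSubgroup.mem_bot).2 <| ext fun i j => ?_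
  by_cases hij : d i - d j = g
  · exact hM.2.2 i j (hij ▸ hgh)
  · exact hM.1.2 i j hij

theorem gradedPiece_zero_sup_one {d : ι → ZMod 2} {C : ZMod 2 → AddSubgroup A} :
    gradedPiece d C 0 ⊔ gradedPiece d C 1 = gradedEntries d C := by
  refine le_antisymm (sup_le (gradedPiece_le 0) (gradedPiece_le 1)) fun M hM => ?_
  have zmod_two : ∀ x : ZMod 2, x ≠ 0 → x = 1 := by decide
  let M₁ : Matrix ι ι A := of fun i j => if d i - d j = 1 then M i j else 0
  have hM₁ : M₁ ∈ gradedPiece d C 1 := by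
    refine ⟨fun i j => ?_, fun i j hij => if_neg hij⟩
    by_cases hij : d i - d j = 1
    · simpa [M₁, hij] using hM i j
    · simp [M₁, hij]
  have hM₀ : M - M₁ ∈ gradedPiece d C 0 := by
    refine ⟨sub_mem hM (gradedPiece_le 1 hM₁), fun i j hij => ?_⟩
    simp [M₁, zmod_two _ hij]
  simpa using AddSubgroup.add_mem_sup hM₀ hM₁

theorem single_mem_gradedPiece [DecidableEq ι] {i j : ι} {a : A} (ha : a ∈ C (d i - d j)) :
    single i j a ∈ gradedPiece d C (d i - d j) := by
  refine ⟨fun k l => ?_, fun k l hkl =>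
    single_apply_of_ne _ _ _ _ _ fun h => hkl (h.1 ▸ h.2 ▸ rfl)⟩
  by_cases h : i = k ∧ j = l
  · obtain ⟨rfl, rfl⟩ := h
    simpa using ha
  · simp [single_apply_of_ne _ _ _ _ _ h]

theorem single_mem_gradedPiece_zero [DecidableEq ι] (i : ι) {a : A} (ha : a ∈ C 0) :
    single i i a ∈ gradedPiece d C 0 := by
  simpa only [sub_self] using single_mem_gradedPiece (d := d) (i := i) (j := i) (by rwa [sub_self])

variable [Fintype ι]

theorem gradedEntries_mul_le (hC : ∀ g h, ∀ a ∈ C g, ∀ b ∈ C h, a * b ∈ C (g + h)) :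
    gradedEntries d C * gradedEntries d C ≤ gradedEntries d C :=
  AddSubgroup.mul_le.2 fun M hM N hN i j => sum_mem fun k _ => by
    simpa only [sub_add_sub_cancel] using hC _ _ _ (hM i k) _ (hN k j)

theorem gradedPiece_mul_le (hC : ∀ g h, ∀ a ∈ C g, ∀ b ∈ C h, a * b ∈ C (g + h)) (g h : G) :
    gradedPiece d C g * gradedPiece d C h ≤ gradedPiece d C (g + h) := by
  refine AddSubgroup.mul_le.2 fun M hM N hN =>
    ⟨gradedEntries_mul_le hC (AddSubgroup.mul_mem_mul hM.1 hN.1), fun i j hij => ?_⟩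
  refine Finset.sum_eq_zero fun k _ => ?_
  dsimp only
  by_cases hik : d i - d k = g
  · have hkj : d k - d j ≠ h := fun hkj => hij (by rw [← hik, ← hkj, sub_add_sub_cancel])
    rw [hN.2 k j hkj, mul_zero]
  · rw [hM.2 i k hik, zero_mul]

theorem smul_one_mem_gradedPiece_zero [DecidableEq ι] {a : A} (ha : a ∈ C 0) :
    a • (1 : Matrix ι ι A) ∈ gradedPiece d C 0 := by
  rw [smul_one_eq_diagonal, ← sum_single_eq_diagonal]
  exact sum_mem fun i _ => single_mem_gradedPiece_zero i ha

theorem one_mem_gradedPiece_zero [DecidableEq ι] (h1 : (1 : A) ∈ C 0) :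
    (1 : Matrix ι ι A) ∈ gradedPiece d C 0 := by
  simpa using smul_one_mem_gradedPiece_zero (d := d) h1

end Graded

end Matrix

namespace Ideal

variable {G A : Type*} [AddGroup G] [DecidableEq G] [CommRing A] {B : Ideal A}

def dadeEntries (B : Ideal A) (g : G) : AddSubgroup A :=
  if g = 0 then ⊤ else B.toAddSubgroup

@[simp]
theorem mem_dadeEntries {g : G} {a : A} : a ∈ B.dadeEntries g ↔ g = 0 ∨ a ∈ B := by
  unfold dadeEntries
  split_ifs with hg <;> simp [hg]

@[simp]
theorem mem_dadeEntries_zero (a : A) : a ∈ B.dadeEntries (0 : G) :=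
  mem_dadeEntries.2 (.inl rfl)

theorem mem_dadeEntries_of_mem {b : A} (hb : b ∈ B) (g : G) : b ∈ B.dadeEntries g :=
  mem_dadeEntries.2 (.inr hb)

theorem mul_mem_dadeEntries (g h : G) :
    ∀ a ∈ B.dadeEntries g, ∀ b ∈ B.dadeEntries h, a * b ∈ B.dadeEntries (g + h) := by
  simp only [mem_dadeEntries]
  rintro a (rfl | ha) b (rfl | hb)
  · simp
  · exact .inr (B.mul_mem_left a hb)
  · exact .inr (B.mul_mem_right b ha)
  · exact .inr (B.mul_mem_right b ha)

end Ideal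

namespace Matrix

section Dade

variable {ι G A : Type*} [DecidableEq ι] [AddGroup G] [DecidableEq G] [CommRing A]
  {d : ι → G} {B : Ideal A} {e : A}

theorem single_mem_gradedEntries_dadeEntries {i j : ι} {b : A} (hb : b ∈ B) :
    single i j b ∈ gradedEntries d B.dadeEntries :=
  gradedPiece_le _ (single_mem_gradedPiece (Ideal.mem_dadeEntries_of_mem hb _))

variable [Fintype ι]

theorem smul_eq_self_of_mem_matrix (he : ∀ b ∈ B, e * b = b) {M : Matrix ι ι A}
    (hM : M ∈ B.matrix ι) : e • M = M :=
  ext fun i j => he _ (hM i j)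

theorem mem_matrix_of_mem_gradedPiece {g : G} (hg : g ≠ 0) {M : Matrix ι ι A}
    (hM : M ∈ gradedPiece d B.dadeEntries g) : M ∈ B.matrix ι := fun i j => by
  by_cases hij : d i - d j = g
  · exact (Ideal.mem_dadeEntries.1 (hM.1 i j)).resolve_left (hij ▸ hg)
  · exact hM.2 i j hij ▸ B.zero_mem

theorem one_notMem_gradedPiece_mul [Nonempty ι] (hB : B ≠ ⊤) (g : G) {h : G} (hh : h ≠ 0) :
    (1 : Matrix ι ι A) ∉ gradedPiece d B.dadeEntries g * gradedPiece d B.dadeEntries h := by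
  intro h1
  have hmatrix : gradedPiece d B.dadeEntries g * gradedPiece d B.dadeEntries h ≤
      (B.matrix ι).toAddSubgroup :=
    AddSubgroup.mul_le.2 fun M _ N hN => (B.matrix ι).mul_mem_left M
      (mem_matrix_of_mem_gradedPiece hh hN)
  let i : ι := Classical.arbitrary ι
  exact hB (B.eq_top_iff_one.2 (by simpa using hmatrix h1 i i))

theorem smul_one_mem_gradedPiece_mul_neg (heB : e ∈ B) (hee : e * e = e) {g : G}
    (hd : ∀ i, ∃ j, d i - d j = g) :
    e • (1 : Matrix ι ι A) ∈ gradedPiece d B.dadeEntries g * gradedPiece d B.dadeEntries (-g) := by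
  rw [smul_one_eq_diagonal, ← sum_single_eq_diagonal]
  refine sum_mem fun i _ => ?_
  obtain ⟨j, hij⟩ := hd i
  have hji : d j - d i = -g := by rw [← hij, neg_sub]
  rw [← hee, ← single_mul_single_same (c := e) i j i e]
  exact AddSubgroup.mul_mem_mul
    (hij ▸ single_mem_gradedPiece (Ideal.mem_dadeEntries_of_mem heB _))
    (hji ▸ single_mem_gradedPiece (Ideal.mem_dadeEntries_of_mem heB _))

theorem one_sub_smul_one_mul_mem_gradedPiece_zero (he : ∀ b ∈ B, e * b = b)
    {s : Matrix ι ι A} (hs : s ∈ gradedEntries d B.dadeEntries) :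
    (1 - e • 1) * s ∈ gradedPiece d B.dadeEntries 0 := by
  rw [sub_mul, one_mul, smul_mul_assoc, one_mul]
  have hvanish : ∀ i j, d i - d j ≠ 0 → (s - e • s) i j = 0 := fun i j hij => by
    simp [he _ ((Ideal.mem_dadeEntries.1 (hs i j)).resolve_left hij)]
  refine ⟨fun i j => ?_, hvanish⟩
  by_cases hij : d i - d j = 0
  · exact hij ▸ Ideal.mem_dadeEntries_zero _
  · exact hvanish i j hij ▸ zero_mem _

theorem _root_.IsBalancedOn.sum_mul_single_eq_sum_single_mul {M : Type*} [AddCommGroup M]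
    {φ : Matrix ι ι A → Matrix ι ι A → M}
    (hφ : IsBalancedOn (gradedPiece d B.dadeEntries 0) (gradedEntries d B.dadeEntries) φ)
    (heB : e ∈ B) (i₀ : ι) {s : Matrix ι ι A} :
    ∑ i, φ (s * single i i₀ e) (single i₀ i e) = ∑ i, φ (single i i₀ e) (single i₀ i e * s) := by
  have hE : ∀ i j (x : A), single i j (e * x) ∈ gradedEntries d B.dadeEntries :=
    fun i j x => single_mem_gradedEntries_dadeEntries (B.mul_mem_right x heB)
  have hE₁ : ∀ i j, single i j e ∈ gradedEntries d B.dadeEntries :=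
    fun i j => single_mem_gradedEntries_dadeEntries heB
  -- `single j i₀ (e * x) = single j i₀ e * single i₀ i₀ x`, and `single i₀ i₀ x` is of degree `0`
  have hmove : ∀ i j, φ (single j i₀ (e * s j i)) (single i₀ i e) =
      φ (single j i₀ e) (single i₀ i (e * s j i)) := fun i j => by
    have := hφ.mul_left_eq_mul_right _
      (single_mem_gradedPiece_zero i₀ (Ideal.mem_dadeEntries_zero (s j i))) _ (hE₁ j i₀) _ (hE₁ i₀ i)
    rwa [single_mul_single_same, single_mul_single_same, mul_comm (s j i) e] at this
  calc ∑ i, φ (s * single i i₀ e) (single i₀ i e)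
      = ∑ i, ∑ j, φ (single j i₀ (e * s j i)) (single i₀ i e) := by
        refine Finset.sum_congr rfl fun i _ => ?_
        simp_rw [mul_single_eq_sum, mul_comm _ e]
        exact hφ.map_sum_left _ (fun j => hE _ _ _) (hE₁ _ _)
    _ = ∑ j, ∑ i, φ (single j i₀ e) (single i₀ i (e * s j i)) := by
        rw [Finset.sum_comm]
        simp_rw [hmove]
    _ = ∑ j, φ (single j i₀ e) (single i₀ j e * s) := by
        refine Finset.sum_congr rfl fun j _ => ?_
        rw [single_mul_eq_sum]
        exact (hφ.map_sum_right _ (hE₁ _ _) fun i => hE _ _ _).symm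

theorem exists_separabilityElement {m : ℕ} {d : Fin m → G} (heB : e ∈ B)
    (he : ∀ b ∈ B, e * b = b) (i₀ : Fin m) :
    ∃ (n : ℕ) (a b : Fin n → Matrix (Fin m) (Fin m) A),
      (∀ k, a k ∈ gradedEntries d B.dadeEntries ∧ b k ∈ gradedEntries d B.dadeEntries) ∧
      ∑ k, a k * b k = 1 ∧
      ∀ {M : Type u} [AddCommGroup M]
        {φ : Matrix (Fin m) (Fin m) A → Matrix (Fin m) (Fin m) A → M},
        IsBalancedOn (gradedPiece d B.dadeEntries 0) (gradedEntries d B.dadeEntries) φ →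
        ∀ s ∈ gradedEntries d B.dadeEntries, ∑ k, φ (s * a k) (b k) = ∑ k, φ (a k) (b k * s) := by
  have h1 : (1 : Matrix (Fin m) (Fin m) A) ∈ gradedPiece d B.dadeEntries 0 :=
    one_mem_gradedPiece_zero (Ideal.mem_dadeEntries_zero 1)
  have hc : (1 - e • 1 : Matrix (Fin m) (Fin m) A) ∈ gradedPiece d B.dadeEntries 0 := by
    simpa [sub_smul] using
      smul_one_mem_gradedPiece_zero (d := d) (Ideal.mem_dadeEntries_zero (B := B) (1 - e))
  refine ⟨m + 1, Fin.cons (1 - e • 1) fun i => single i i₀ e, Fin.cons 1 fun i => single i₀ i e,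
    Fin.cases ⟨gradedPiece_le 0 hc, gradedPiece_le 0 h1⟩ fun i =>
      ⟨single_mem_gradedEntries_dadeEntries heB, single_mem_gradedEntries_dadeEntries heB⟩, ?_, ?_⟩
  · rw [Fin.sum_univ_succ]
    simp only [Fin.cons_zero, Fin.cons_succ, mul_one]
    rw [sum_single_mul_single (he e heB), sub_add_cancel]
  · intro M _ φ hφ s hs
    have hcomm : Commute s (1 - e • 1) :=
      (Commute.one_right s).sub_right ((Commute.one_right s).smul_right e)
    simp only [Fin.sum_univ_succ, Fin.cons_zero, Fin.cons_succ, one_mul]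
    rw [hφ.map_mul_one_of_commute (gradedPiece_le 0 h1) hc hs
      (one_sub_smul_one_mul_mem_gradedPiece_zero he hs) hcomm,
      hφ.sum_mul_single_eq_sum_single_mul heB]

end Dade

end Matrix

/-- Dade-like example: let `A` be a commutative unital ring and `B ⊊ A` a unital ideal with
identity `e = 1_B`.  Inside the matrix ring `M₃(A)`, let `Stot` be the set of matrices whose
`(1,3), (2,3), (3,1), (3,2)` entries lie in `B`, graded by `ℤ₂` with `S0` the matrices
supported on `{(1,1),(1,2),(2,1),(2,2),(3,3)}` and `S1` the matrices supported on
`{(1,3),(2,3),(3,1),(3,2)}` with entries in `B`.  Then this is an epsilon-strong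
`ℤ₂`-grading with `ε₀ = 1` and `ε₁ = e • 1`, it is not strong, and `Stot` is separable over
`S0`. -/
theorem dade_like_example {A : Type*} [CommRing A] (B : Ideal A) (e : A)
    (heB : e ∈ B) (hBid : ∀ b ∈ B, e * b = b) (hBne : B ≠ ⊤)
    (S0 S1 Stot : AddSubgroup (Matrix (Fin 3) (Fin 3) A))
    (hS0 : ∀ M : Matrix (Fin 3) (Fin 3) A,
      M ∈ S0 ↔ (M 0 2 = 0 ∧ M 1 2 = 0 ∧ M 2 0 = 0 ∧ M 2 1 = 0))
    (hS1 : ∀ M : Matrix (Fin 3) (Fin 3) A,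
      M ∈ S1 ↔ (M 0 0 = 0 ∧ M 0 1 = 0 ∧ M 1 0 = 0 ∧ M 1 1 = 0 ∧ M 2 2 = 0 ∧
        M 0 2 ∈ B ∧ M 1 2 ∈ B ∧ M 2 0 ∈ B ∧ M 2 1 ∈ B))
    (hStot : ∀ M : Matrix (Fin 3) (Fin 3) A,
      M ∈ Stot ↔ (M 0 2 ∈ B ∧ M 1 2 ∈ B ∧ M 2 0 ∈ B ∧ M 2 1 ∈ B)) :
    -- `Stot = S0 ⊕ S1` is a `ℤ₂`-grading of the ring `Stot`
    (S0 ⊓ S1 = ⊥) ∧ (S0 ⊔ S1 = Stot) ∧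
    ((1 : Matrix (Fin 3) (Fin 3) A) ∈ S0) ∧
    (S0 * S0 ≤ S0) ∧ (S0 * S1 ≤ S1) ∧ (S1 * S0 ≤ S1) ∧ (S1 * S1 ≤ S0) ∧
    -- the grading is epsilon-strong, with `ε₀ = 1` and `ε₁ = e • 1`
    ((1 : Matrix (Fin 3) (Fin 3) A) ∈ S0 * S0) ∧
    (e • (1 : Matrix (Fin 3) (Fin 3) A) ∈ S1 * S1) ∧
    (∀ s ∈ S1, (e • (1 : Matrix (Fin 3) (Fin 3) A)) * s = s ∧
      s * (e • (1 : Matrix (Fin 3) (Fin 3) A)) = s) ∧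
    -- the grading is not strong
    (S1 * S1 ≠ S0) ∧
    -- the extension `Stot / S0` is separable
    (∃ (n : ℕ) (a b : Fin n → Matrix (Fin 3) (Fin 3) A),
      (∀ i, a i ∈ Stot ∧ b i ∈ Stot) ∧ (∑ i, a i * b i) = 1 ∧
      ∀ (M : Type u) [AddCommGroup M] (φ : Matrix (Fin 3) (Fin 3) A → Matrix (Fin 3) (Fin 3) A → M),
        (∀ x ∈ Stot, ∀ x' ∈ Stot, ∀ y ∈ Stot, φ (x + x') y = φ x y + φ x' y) →
        (∀ x ∈ Stot, ∀ y ∈ Stot, ∀ y' ∈ Stot, φ x (y + y') = φ x y + φ x y') →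
        (∀ r ∈ S0, ∀ x ∈ Stot, ∀ y ∈ Stot, φ (x * r) y = φ x (r * y)) →
        ∀ s ∈ Stot, (∑ i, φ (s * a i) (b i)) = ∑ i, φ (a i) (b i * s)) := by
  let d : Fin 3 → ZMod 2 := ![0, 0, 1]
  obtain rfl : S0 = Matrix.gradedPiece d B.dadeEntries 0 := AddSubgroup.ext fun M => by
    rw [hS0]
    simp +contextual [d, Fin.forall_fin_succ]
  obtain rfl : S1 = Matrix.gradedPiece d B.dadeEntries 1 := AddSubgroup.ext fun M => by
    rw [hS1]
    constructor <;> simp +contextual [d, Fin.forall_fin_succ]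
  obtain rfl : Stot = Matrix.gradedEntries d B.dadeEntries := AddSubgroup.ext fun M => by
    rw [hStot]
    simp [d, Fin.forall_fin_succ]
  have h1 : (1 : Matrix (Fin 3) (Fin 3) A) ∈ Matrix.gradedPiece d B.dadeEntries 0 :=
    Matrix.one_mem_gradedPiece_zero (Ideal.mem_dadeEntries_zero 1)
  have hmul := Matrix.gradedPiece_mul_le (d := d) (Ideal.mul_mem_dadeEntries (B := B))
  have hε : ∀ s ∈ Matrix.gradedPiece d B.dadeEntries 1, e • s = s := fun s hs =>
    Matrix.smul_eq_self_of_mem_matrix hBid (Matrix.mem_matrix_of_mem_gradedPiece one_ne_zero hs)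
  obtain ⟨n, a, b, hab, hsum, hsep⟩ := Matrix.exists_separabilityElement (d := d) heB hBid 0
  refine ⟨Matrix.gradedPiece_inf_eq_bot zero_ne_one, Matrix.gradedPiece_zero_sup_one, h1,
    hmul 0 0, hmul 0 1, hmul 1 0, hmul 1 1, by simpa using AddSubgroup.mul_mem_mul h1 h1,
    Matrix.smul_one_mem_gradedPiece_mul_neg heB (hBid e heB) (by decide),
    fun s hs => ⟨by rw [smul_mul_assoc, one_mul, hε s hs], by rw [mul_smul_comm, mul_one, hε s hs]⟩,
    fun h => Matrix.one_notMem_gradedPiece_mul hBne 1 one_ne_zero (h ▸ h1),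
    n, a, b, hab, hsum, fun M _ φ hadd₁ hadd₂ hbal => hsep ⟨hadd₁, hadd₂, hbal⟩⟩
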